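/- Let A ∈ ℂ^{m×n} have rows of unit Euclidean norm, let x̂ ∈ ℂ^n, and let y ∈ ℝ^m with y_r = |(A x̂)_r|². Let σ > 0 satisfy ‖A v‖₂ ≥ σ‖v‖₂ for all v ∈ ℂ^n. Let {Γ_1,…,Γ_{N_b}} be a partition of the row indices {1,…,m} such that each row submatrix A_{Γ_r} has full row rank, and let 0 < α ≤ β satisfy α ≤ σ_min²(A_{Γ_r}) and σ_max²(A_{Γ_r}) ≤ β for every r (an (N_b, α, β) row paving of A). Fix x_0 ∈ ℂ^n and for each sequence (r_1,…,r_l) ∈ {1,…,N_b}^l define iterates by x_k = x_{k−1} + A_{Γ_{r_k}}†(√(y_{Γ_{r_k}}) ⊙ phase(A_{Γ_{r_k}} x_{k−1}) − A_{Γ_{r_k}} x_{k−1}), where M† = Mᴴ(MMᴴ)^{-1}. Then for every l ≥ 0, (1/N_b^l) Σ_{(r_1,…,r_l) ∈ {1,…,N_b}^l} dist²(x_l^{(r_1,…,r_l)}, x̂) ≤ (1 − σ²/(β N_b))^l · dist²(x_0, x̂) + (4β/(α σ²))·Σ_{r=1}^m y_r. (Convergence of the randomized block Kaczmarz method for phase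 retrieval with uniform block selection.) -/

import Mathlib

open scoped BigOperators ComplexConjugate

/-- phase(w) = w/|w| if w ≠ 0, else 1. -/
noncomputable def phase (w : ℂ) : ℂ := if w = 0 then 1 else w / (‖w‖ : ℂ)

/-- Euclidean norm of a complex vector. -/
noncomputable def evnorm {ι : Type*} [Fintype ι] (v : ι → ℂ) : ℝ :=
  Real.sqrt (∑ i, ‖v i‖ ^ 2)

/-- Euclidean norm of a real vector. -/
noncomputable def rvnorm {ι : Type*} [Fintype ι] (v : ι → ℝ) : ℝ :=
  Real.sqrt (∑ i, (v i) ^ 2)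

/-- Standard Hermitian inner product, conjugate-linear in the first argument. -/
noncomputable def hinner {n : ℕ} (a x : Fin n → ℂ) : ℂ := ∑ i, conj (a i) * x i

/-- dist(x, x̂) = min over unimodular ω of ‖x − ω·x̂‖₂. -/
noncomputable def pdist {n : ℕ} (x xhat : Fin n → ℂ) : ℝ :=
  ⨅ ω : {ω : ℂ // ‖ω‖ = 1}, evnorm (x - (ω : ℂ) • xhat)

/-- Operator (spectral) norm of a complex matrix w.r.t. Euclidean norms. -/
noncomputable def matOpNorm {ι κ : Type*} [Fintype ι] [Fintype κ] [DecidableEq κ]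
    (M : Matrix ι κ ℂ) : ℝ :=
  ‖LinearMap.toContinuousLinearMap (Matrix.toEuclideanLin M)‖

/-!
For a block `N` with `N Nᴴ` invertible, `Q = Nᴴ (N Nᴴ)⁻¹` is a right inverse of `N` whose range
lies in `range Nᴴ = (ker N)ᗮ`. Writing `e = x - ω x̂` for an optimal phase `ω`, the error after one
step splits orthogonally as `(e - Q N e) + Q (b ⊙ phase (N x) - ω N x̂)`. The first part has squared
norm `‖e‖² - ‖Q N e‖² ≤ ‖e‖² - ‖N e‖² / β`; the second at most `4 ‖N x̂‖² / α`, since both vectors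
inside have entrywise modulus `|(N x̂)ᵢ|`. Summing over the blocks of the paving and using
`‖A e‖ ≥ σ ‖e‖` gives `𝔼 dist²(x⁺, x̂) ≤ q dist²(x, x̂) + (1 - q) K` with `q = 1 - σ² / (β N_b)`
and `K = 4 β ‖A x̂‖² / (α σ²)`, so `dist² - K` contracts by the factor `q` in expectation.
-/
open Matrix WithLp

section EuclideanNorm

variable {ι κ : Type*} [Fintype ι] [Fintype κ]

lemma evnorm_eq_norm_toLp (v : ι → ℂ) : evnorm v = ‖toLp 2 v‖ := by
  rw [EuclideanSpace.norm_eq]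
  rfl

lemma evnorm_nonneg (v : ι → ℂ) : 0 ≤ evnorm v :=
  Real.sqrt_nonneg _

lemma evnorm_sq (v : ι → ℂ) : evnorm v ^ 2 = ∑ i, ‖v i‖ ^ 2 :=
  Real.sq_sqrt (Finset.sum_nonneg fun _ _ => sq_nonneg _)

lemma evnorm_of_isEmpty [IsEmpty ι] (v : ι → ℂ) : evnorm v = 0 := by
  simp [evnorm]

lemma inner_toLp_mulVec (N : Matrix κ ι ℂ) (v : ι → ℂ) (z : κ → ℂ) :
    inner ℂ (toLp 2 (N *ᵥ v)) (toLp 2 z) = inner ℂ (toLp 2 v) (toLp 2 (Nᴴ *ᵥ z)) := by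
  simp only [EuclideanSpace.inner_toLp_toLp, star_mulVec, dotProduct_comm z,
    dotProduct_comm _ (star v), dotProduct_mulVec]

lemma evnorm_mulVec_sq_le (N : Matrix κ ι ℂ) (v : ι → ℂ) :
    evnorm (N *ᵥ v) ^ 2 ≤ evnorm v * evnorm (Nᴴ *ᵥ (N *ᵥ v)) := by
  simp only [evnorm_eq_norm_toLp, ← inner_self_eq_norm_sq (𝕜 := ℂ), inner_toLp_mulVec]
  exact (RCLike.re_le_norm _).trans (norm_inner_le_norm _ _)

lemma evnorm_add_conjTranspose_mulVec_sq {N : Matrix κ ι ℂ} {u : ι → ℂ} (hu : N *ᵥ u = 0)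
    (z : κ → ℂ) : evnorm (u + Nᴴ *ᵥ z) ^ 2 = evnorm u ^ 2 + evnorm (Nᴴ *ᵥ z) ^ 2 := by
  have horth : inner ℂ (toLp 2 u) (toLp 2 (Nᴴ *ᵥ z)) = 0 := by
    rw [← inner_toLp_mulVec, hu, toLp_zero, inner_zero_left]
  simp only [evnorm_eq_norm_toLp, toLp_add, sq]
  exact norm_add_sq_eq_norm_sq_add_norm_sq_of_inner_eq_zero _ _ horth

lemma evnorm_mulVec_sq_le_of_conjTranspose {N : Matrix κ ι ℂ} {β : ℝ} (hβ : 0 ≤ β)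
    (hhi : ∀ z, evnorm (Nᴴ *ᵥ z) ^ 2 ≤ β * evnorm z ^ 2) (v : ι → ℂ) :
    evnorm (N *ᵥ v) ^ 2 ≤ β * evnorm v ^ 2 := by
  set a := evnorm (N *ᵥ v)
  set c := evnorm (Nᴴ *ᵥ (N *ᵥ v))
  have hcs : a ^ 2 ≤ evnorm v * c := evnorm_mulVec_sq_le N v
  have hc : c ^ 2 ≤ β * a ^ 2 := hhi (N *ᵥ v)
  have hsq : a ^ 2 * a ^ 2 ≤ a ^ 2 * (β * evnorm v ^ 2) := by
    calc a ^ 2 * a ^ 2 ≤ (evnorm v * c) ^ 2 := by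
          rw [← sq]; exact pow_le_pow_left₀ (sq_nonneg a) hcs 2
      _ = evnorm v ^ 2 * c ^ 2 := mul_pow _ _ _
      _ ≤ evnorm v ^ 2 * (β * a ^ 2) := by gcongr
      _ = a ^ 2 * (β * evnorm v ^ 2) := by ring
  rcases (sq_nonneg a).eq_or_lt with ha | ha
  · rw [← ha]; positivity
  · exact le_of_mul_le_mul_left hsq ha

end EuclideanNorm

lemma norm_phase (w : ℂ) : ‖phase w‖ = 1 := by
  unfold phase
  split_ifs with h
  · exact norm_one
  · rw [norm_div, Complex.norm_real, norm_norm, div_self (norm_ne_zero_iff.mpr h)]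

lemma norm_mul_phase_sub_sq_le (w z ω : ℂ) (hω : ‖ω‖ = 1) :
    ‖(‖w‖ : ℂ) * phase z - ω * w‖ ^ 2 ≤ 4 * ‖w‖ ^ 2 := by
  have h : ‖(‖w‖ : ℂ) * phase z - ω * w‖ ≤ 2 * ‖w‖ := by
    calc _ ≤ ‖(‖w‖ : ℂ) * phase z‖ + ‖ω * w‖ := norm_sub_le _ _
      _ = 2 * ‖w‖ := by rw [norm_mul, norm_mul, norm_phase, hω, Complex.norm_real, norm_norm]; ring
  nlinarith [norm_nonneg ((‖w‖ : ℂ) * phase z - ω * w)]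

section BlockStep

variable {ι κ : Type*} [Fintype ι] [Fintype κ] [DecidableEq κ]

noncomputable def blockKaczmarzStep (N : Matrix κ ι ℂ) (b : κ → ℝ) (x : ι → ℂ) : ι → ℂ :=
  x + (Nᴴ * (N * Nᴴ)⁻¹) *ᵥ fun i => (b i : ℂ) * phase ((N *ᵥ x) i) - (N *ᵥ x) i

lemma mulVec_pinv_mulVec {N : Matrix κ ι ℂ} (hfull : IsUnit (N * Nᴴ)) (z : κ → ℂ) :
    N *ᵥ ((Nᴴ * (N * Nᴴ)⁻¹) *ᵥ z) = z := by
  rw [mulVec_mulVec, ← Matrix.mul_assoc, mul_nonsing_inv _ ((isUnit_iff_isUnit_det _).mp hfull),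
    one_mulVec]

lemma evnorm_pinv_mulVec_sq_le {N : Matrix κ ι ℂ} (hfull : IsUnit (N * Nᴴ)) {α : ℝ} (hα : 0 < α)
    (hlo : ∀ z, α * evnorm z ^ 2 ≤ evnorm (Nᴴ *ᵥ z) ^ 2) (d : κ → ℂ) :
    α * evnorm ((Nᴴ * (N * Nᴴ)⁻¹) *ᵥ d) ^ 2 ≤ evnorm d ^ 2 := by
  set z := (N * Nᴴ)⁻¹ *ᵥ d
  have hz : N *ᵥ (Nᴴ *ᵥ z) = d := by
    rw [← mulVec_pinv_mulVec hfull d, ← mulVec_mulVec]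
  rw [← mulVec_mulVec]
  set w := evnorm (Nᴴ *ᵥ z)
  have hcs : w ^ 2 ≤ evnorm z * evnorm d := by
    simpa only [conjTranspose_conjTranspose, hz] using evnorm_mulVec_sq_le Nᴴ z
  have hz2 : α * evnorm z ^ 2 ≤ w ^ 2 := hlo z
  nlinarith [evnorm_nonneg z, evnorm_nonneg d, sq_nonneg (α * evnorm z - evnorm d)]

lemma evnorm_blockKaczmarzStep_sub_sq_le {N : Matrix κ ι ℂ} (hfull : IsUnit (N * Nᴴ))
    {α β : ℝ} (hα : 0 < α) (hβ : 0 < β)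
    (hlo : ∀ z, α * evnorm z ^ 2 ≤ evnorm (Nᴴ *ᵥ z) ^ 2)
    (hhi : ∀ z, evnorm (Nᴴ *ᵥ z) ^ 2 ≤ β * evnorm z ^ 2)
    (x xhat : ι → ℂ) {ω : ℂ} (hω : ‖ω‖ = 1) :
    evnorm (blockKaczmarzStep N (fun i => ‖(N *ᵥ xhat) i‖) x - ω • xhat) ^ 2 ≤
      evnorm (x - ω • xhat) ^ 2 - evnorm (N *ᵥ (x - ω • xhat)) ^ 2 / β
        + 4 / α * evnorm (N *ᵥ xhat) ^ 2 := by
  set Q := Nᴴ * (N * Nᴴ)⁻¹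
  have hQ : ∀ z, Q *ᵥ z = Nᴴ *ᵥ ((N * Nᴴ)⁻¹ *ᵥ z) := fun z => (mulVec_mulVec _ _ _).symm
  set e := x - ω • xhat
  set b : κ → ℂ := fun i => (‖(N *ᵥ xhat) i‖ : ℂ) * phase ((N *ᵥ x) i)
  set u := e - Q *ᵥ (N *ᵥ e)
  have hu : N *ᵥ u = 0 := by rw [mulVec_sub, mulVec_pinv_mulVec hfull, sub_self]
  have hsplit : blockKaczmarzStep N (fun i => ‖(N *ᵥ xhat) i‖) x - ω • xhat
      = u + Q *ᵥ (b - ω • (N *ᵥ xhat)) := by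
    change x + Q *ᵥ (b - N *ᵥ x) - ω • xhat = _
    simp only [u, e, mulVec_sub, mulVec_smul]
    abel
  have he : evnorm e ^ 2 = evnorm u ^ 2 + evnorm (Q *ᵥ (N *ᵥ e)) ^ 2 := by
    rw [hQ, ← evnorm_add_conjTranspose_mulVec_sq hu, ← hQ, sub_add_cancel]
  have hNe : evnorm (N *ᵥ e) ^ 2 / β ≤ evnorm (Q *ᵥ (N *ᵥ e)) ^ 2 := by
    have h := evnorm_mulVec_sq_le_of_conjTranspose hβ.le hhi (Q *ᵥ (N *ᵥ e))
    rw [mulVec_pinv_mulVec hfull] at h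
    rwa [div_le_iff₀' hβ]
  have hd : evnorm (b - ω • (N *ᵥ xhat)) ^ 2 ≤ 4 * evnorm (N *ᵥ xhat) ^ 2 := by
    rw [evnorm_sq, evnorm_sq, Finset.mul_sum]
    exact Finset.sum_le_sum fun i _ => norm_mul_phase_sub_sq_le _ _ _ hω
  have hQd : evnorm (Q *ᵥ (b - ω • (N *ᵥ xhat))) ^ 2 ≤ 4 / α * evnorm (N *ᵥ xhat) ^ 2 := by
    rw [div_mul_eq_mul_div, le_div_iff₀' hα]
    exact (evnorm_pinv_mulVec_sq_le hfull hα hlo _).trans hd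
  rw [hsplit, hQ, evnorm_add_conjTranspose_mulVec_sq hu, ← hQ]
  linarith

end BlockStep

section PhaseDistance

variable {n : ℕ}

lemma pdist_nonneg (x xhat : Fin n → ℂ) : 0 ≤ pdist x xhat :=
  Real.iInf_nonneg fun _ => evnorm_nonneg _

lemma pdist_le (x xhat : Fin n → ℂ) {ω : ℂ} (hω : ‖ω‖ = 1) :
    pdist x xhat ≤ evnorm (x - ω • xhat) :=
  ciInf_le ⟨0, by rintro _ ⟨ω', rfl⟩; exact evnorm_nonneg _⟩ (⟨ω, hω⟩ : {ω : ℂ // ‖ω‖ = 1})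

lemma exists_pdist_eq (x xhat : Fin n → ℂ) :
    ∃ ω : ℂ, ‖ω‖ = 1 ∧ pdist x xhat = evnorm (x - ω • xhat) := by
  have hcont : Continuous fun ω : ℂ => evnorm (x - ω • xhat) := by
    simp only [evnorm_eq_norm_toLp, toLp_sub, toLp_smul]
    fun_prop
  obtain ⟨ω, hω, hmin⟩ := (isCompact_sphere (0 : ℂ) 1).exists_isMinOn
    (NormedSpace.sphere_nonempty.mpr zero_le_one) hcont.continuousOn
  rw [mem_sphere_zero_iff_norm] at hω
  have : Nonempty {ω : ℂ // ‖ω‖ = 1} := ⟨⟨ω, hω⟩⟩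
  exact ⟨ω, hω, (pdist_le x xhat hω).antisymm
    (le_ciInf fun ω' => hmin (mem_sphere_zero_iff_norm.mpr ω'.2))⟩

lemma pdist_fin_zero (x xhat : Fin 0 → ℂ) : pdist x xhat = 0 := by
  obtain ⟨ω, -, h⟩ := exists_pdist_eq x xhat
  rw [h, evnorm_of_isEmpty]

end PhaseDistance

section Paving

variable {ρ ι κ : Type*} [Fintype ι] {Γ : ρ → Finset κ}

lemma Finset.sum_sum_of_partition [Fintype ρ] [Fintype κ] {M : Type*} [AddCommMonoid M]
    (hdisj : ∀ r s, r ≠ s → Disjoint (Γ r) (Γ s)) (hcover : ∀ k, ∃ r, k ∈ Γ r) (f : κ → M) :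
    ∑ r, ∑ k ∈ Γ r, f k = ∑ k, f k := by
  classical
  rw [← Finset.sum_biUnion fun r _ s _ hrs => hdisj r s hrs]
  congr
  ext k
  simpa using hcover k

variable {A : Matrix κ ι ℂ} {M : (r : ρ) → Matrix (Γ r) ι ℂ}

lemma block_mulVec_apply (hM : ∀ r (i : Γ r) j, M r i j = A i j) (r : ρ) (v : ι → ℂ)
    (i : Γ r) : (M r *ᵥ v) i = (A *ᵥ v) i := by
  rw [show M r = A.submatrix (↑) id from Matrix.ext (hM r)]
  rfl

lemma evnorm_block_mulVec_sq (hM : ∀ r (i : Γ r) j, M r i j = A i j) (r : ρ) (v : ι → ℂ) :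
    evnorm (M r *ᵥ v) ^ 2 = ∑ k ∈ Γ r, ‖(A *ᵥ v) k‖ ^ 2 := by
  simp only [evnorm_sq, block_mulVec_apply hM, ← Finset.sum_coe_sort (Γ r)]

lemma sum_evnorm_block_mulVec_sq [Fintype ρ] [Fintype κ] (hM : ∀ r (i : Γ r) j, M r i j = A i j)
    (hdisj : ∀ r s, r ≠ s → Disjoint (Γ r) (Γ s)) (hcover : ∀ k, ∃ r, k ∈ Γ r) (v : ι → ℂ) :
    ∑ r, evnorm (M r *ᵥ v) ^ 2 = evnorm (A *ᵥ v) ^ 2 := by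
  simp only [evnorm_block_mulVec_sq hM, Finset.sum_sum_of_partition hdisj hcover, evnorm_sq]

lemma sq_le_mul_card_of_paving [Fintype ρ] [Fintype κ] [Nonempty ι]
    (hM : ∀ r (i : Γ r) j, M r i j = A i j)
    (hdisj : ∀ r s, r ≠ s → Disjoint (Γ r) (Γ s)) (hcover : ∀ k, ∃ r, k ∈ Γ r)
    {σ β : ℝ} (hσ : 0 ≤ σ) (hsing : ∀ v, σ * evnorm v ≤ evnorm (A *ᵥ v))
    (hhi : ∀ r v, evnorm (M r *ᵥ v) ^ 2 ≤ β * evnorm v ^ 2) :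
    σ ^ 2 ≤ β * Fintype.card ρ := by
  set v : ι → ℂ := fun _ => 1
  have hv : 0 < evnorm v ^ 2 := by
    simpa [evnorm_sq, v] using Fintype.card_pos
  have key : σ ^ 2 * evnorm v ^ 2 ≤ (β * Fintype.card ρ) * evnorm v ^ 2 :=
    calc σ ^ 2 * evnorm v ^ 2 = (σ * evnorm v) ^ 2 := by ring
      _ ≤ evnorm (A *ᵥ v) ^ 2 := pow_le_pow_left₀ (by positivity [evnorm_nonneg v]) (hsing v) 2
      _ = ∑ r, evnorm (M r *ᵥ v) ^ 2 := (sum_evnorm_block_mulVec_sq hM hdisj hcover v).symm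
      _ ≤ ∑ _r : ρ, β * evnorm v ^ 2 := Finset.sum_le_sum fun r _ => hhi r v
      _ = (β * Fintype.card ρ) * evnorm v ^ 2 := by
        rw [Finset.sum_const, Finset.card_univ, nsmul_eq_mul]; ring
  exact le_of_mul_le_mul_right key hv

end Paving

lemma sum_foldl_ofFn_le_pow_mul {X ι : Type*} [Fintype ι] (g : X → ℝ) (step : X → ι → X)
    {p : ℝ} (hp : 0 ≤ p) (hstep : ∀ x, ∑ r, g (step x r) ≤ p * g x) (l : ℕ) (x : X) :
    ∑ seq : Fin l → ι, g ((List.ofFn seq).foldl step x) ≤ p ^ l * g x := by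
  induction l generalizing x with
  | zero => simp
  | succ l ih =>
    have hsplit : ∑ seq : Fin (l + 1) → ι, g ((List.ofFn seq).foldl step x)
        = ∑ r, ∑ seq : Fin l → ι, g ((List.ofFn seq).foldl step (step x r)) := by
      rw [← Fintype.sum_prod_type', ← (Fin.consEquiv fun _ => ι).sum_comp]
      simp [Fin.consEquiv, List.ofFn_succ]
    calc _ = ∑ r, ∑ seq : Fin l → ι, g ((List.ofFn seq).foldl step (step x r)) := hsplit
      _ ≤ ∑ r, p ^ l * g (step x r) := Finset.sum_le_sum fun r _ => ih (step x r)
      _ = p ^ l * ∑ r, g (step x r) := (Finset.mul_sum _ _ _).symm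
      _ ≤ p ^ l * (p * g x) := mul_le_mul_of_nonneg_left (hstep x) (pow_nonneg hp l)
      _ = p ^ (l + 1) * g x := by ring

lemma sum_foldl_ofFn_le_pow_mul_add {X ι : Type*} [Fintype ι] (f : X → ℝ) (step : X → ι → X)
    {q K : ℝ} (hq : 0 ≤ q) (hK : 0 ≤ K)
    (hstep : ∀ x, ∑ r, f (step x r) ≤ Fintype.card ι * (q * f x + (1 - q) * K)) (l : ℕ) (x : X) :
    ∑ seq : Fin l → ι, f ((List.ofFn seq).foldl step x) ≤
      Fintype.card ι ^ l * (q ^ l * f x + K) := by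
  have hcontract : ∀ x, ∑ r, (f (step x r) - K) ≤ (Fintype.card ι * q) * (f x - K) := by
    intro x
    rw [Finset.sum_sub_distrib, Finset.sum_const, Finset.card_univ, nsmul_eq_mul]
    linarith [hstep x]
  have h := sum_foldl_ofFn_le_pow_mul (fun x => f x - K) step (by positivity) hcontract l x
  rw [Finset.sum_sub_distrib, Finset.sum_const, Finset.card_univ, Fintype.card_fun,
    Fintype.card_fin, nsmul_eq_mul, Nat.cast_pow, mul_pow] at h
  have : 0 ≤ (Fintype.card ι : ℝ) ^ l * q ^ l * K := by positivity
  linarith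

lemma sum_pdist_blockKaczmarzStep_sq_le {ρ κ : Type*} [Fintype ρ] [Fintype κ] [DecidableEq κ]
    {n : ℕ} {A : Matrix κ (Fin n) ℂ} {Γ : ρ → Finset κ} {M : (r : ρ) → Matrix (Γ r) (Fin n) ℂ}
    (hM : ∀ r (i : Γ r) j, M r i j = A i j)
    (hdisj : ∀ r s, r ≠ s → Disjoint (Γ r) (Γ s)) (hcover : ∀ k, ∃ r, k ∈ Γ r)
    (hfull : ∀ r, IsUnit (M r * (M r)ᴴ)) {σ α β : ℝ} (hσ : 0 ≤ σ)
    (hsing : ∀ v, σ * evnorm v ≤ evnorm (A *ᵥ v)) (hα : 0 < α) (hβ : 0 < β)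
    (hlo : ∀ r z, α * evnorm z ^ 2 ≤ evnorm ((M r)ᴴ *ᵥ z) ^ 2)
    (hhi : ∀ r z, evnorm ((M r)ᴴ *ᵥ z) ^ 2 ≤ β * evnorm z ^ 2) (x xhat : Fin n → ℂ) :
    ∑ r, pdist (blockKaczmarzStep (M r) (fun i => ‖(M r *ᵥ xhat) i‖) x) xhat ^ 2 ≤
      Fintype.card ρ * pdist x xhat ^ 2 - σ ^ 2 / β * pdist x xhat ^ 2
        + 4 / α * evnorm (A *ᵥ xhat) ^ 2 := by
  obtain ⟨ω, hω, hD⟩ := exists_pdist_eq x xhat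
  set e := x - ω • xhat
  have hAe : σ ^ 2 / β * pdist x xhat ^ 2 ≤ evnorm (A *ᵥ e) ^ 2 / β := by
    rw [div_mul_eq_mul_div, ← mul_pow, hD]
    exact div_le_div_of_nonneg_right
      (pow_le_pow_left₀ (mul_nonneg hσ (evnorm_nonneg e)) (hsing e) 2) hβ.le
  calc _ ≤ ∑ r, (pdist x xhat ^ 2 - evnorm (M r *ᵥ e) ^ 2 / β
          + 4 / α * evnorm (M r *ᵥ xhat) ^ 2) := by
        refine Finset.sum_le_sum fun r _ => ?_
        rw [hD]
        exact (pow_le_pow_left₀ (pdist_nonneg _ _) (pdist_le _ _ hω) 2).trans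
          (evnorm_blockKaczmarzStep_sub_sq_le (hfull r) hα hβ (hlo r) (hhi r) x xhat hω)
    _ = Fintype.card ρ * pdist x xhat ^ 2 - evnorm (A *ᵥ e) ^ 2 / β
          + 4 / α * evnorm (A *ᵥ xhat) ^ 2 := by
        simp only [Finset.sum_add_distrib, Finset.sum_sub_distrib, ← Finset.sum_div,
          ← Finset.mul_sum, sum_evnorm_block_mulVec_sq hM hdisj hcover, Finset.sum_const,
          Finset.card_univ, nsmul_eq_mul]
    _ ≤ _ := by linarith

/-- The paving bounds `α ≤ σ_min²(A_Γ)` and `σ_max²(A_Γ) ≤ β` are encoded as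
`α ‖z‖² ≤ ‖A_Γᴴ z‖² ≤ β ‖z‖²`. -/
theorem stmt12_general {m n Nb : ℕ} (A : Matrix (Fin m) (Fin n) ℂ)
    (xhat : Fin n → ℂ) (y : Fin m → ℝ)
    (hy : ∀ r, y r = ‖A.mulVec xhat r‖ ^ 2)
    (σ : ℝ) (hσ : 0 < σ)
    (hsing : ∀ v : Fin n → ℂ, σ * evnorm v ≤ evnorm (A.mulVec v))
    (Γ : Fin Nb → Finset (Fin m))
    (hdisj : ∀ i j : Fin Nb, i ≠ j → Disjoint (Γ i) (Γ j))
    (hcover : ∀ k : Fin m, ∃ r, k ∈ Γ r)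
    (M : (r : Fin Nb) → Matrix (Γ r) (Fin n) ℂ)
    (hM : ∀ r (i : Γ r) (j : Fin n), M r i j = A i.1 j)
    (hfull : ∀ r, IsUnit (M r * (M r).conjTranspose))
    (α β : ℝ) (hα : 0 < α) (hαβ : α ≤ β)
    (hpave_lo : ∀ r (z : Γ r → ℂ),
      α * evnorm z ^ 2 ≤ evnorm ((M r).conjTranspose.mulVec z) ^ 2)
    (hpave_hi : ∀ r (z : Γ r → ℂ),
      evnorm ((M r).conjTranspose.mulVec z) ^ 2 ≤ β * evnorm z ^ 2)
    (x0 : Fin n → ℂ)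
    (step : (Fin n → ℂ) → Fin Nb → (Fin n → ℂ))
    (hstep : ∀ (x : Fin n → ℂ) (r : Fin Nb), step x r =
      x + ((M r).conjTranspose * (M r * (M r).conjTranspose)⁻¹).mulVec
        (fun i => (Real.sqrt (y i.1) : ℂ) * phase ((M r).mulVec x i) - (M r).mulVec x i)) :
    ∀ l : ℕ,
      (1 / (Nb : ℝ) ^ l) * ∑ seq : Fin l → Fin Nb,
          pdist ((List.ofFn seq).foldl step x0) xhat ^ 2 ≤
        (1 - σ ^ 2 / (β * (Nb : ℝ))) ^ l * pdist x0 xhat ^ 2 +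
          (4 * β / (α * σ ^ 2)) * ∑ r, y r := by
  intro l
  have hsum_y : ∑ r, y r = evnorm (A *ᵥ xhat) ^ 2 := by
    rw [evnorm_sq]; exact Finset.sum_congr rfl fun r _ => hy r
  rw [hsum_y]
  have hβ : 0 < β := hα.trans_le hαβ
  obtain rfl | hn := n.eq_zero_or_pos
  · simp [pdist_fin_zero]
    positivity
  have : Nonempty (Fin n) := Fin.pos_iff_nonempty.mp hn
  have hσβ : σ ^ 2 ≤ β * Nb := by
    simpa using sq_le_mul_card_of_paving hM hdisj hcover hσ.le hsing
      fun r => evnorm_mulVec_sq_le_of_conjTranspose hβ.le (hpave_hi r)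
  have hNb : (0 : ℝ) < Nb := pos_of_mul_pos_right ((pow_pos hσ 2).trans_le hσβ) hβ.le
  have hstep' : ∀ x r, step x r = blockKaczmarzStep (M r) (fun i => ‖(M r *ᵥ xhat) i‖) x := by
    intro x r
    rw [hstep, blockKaczmarzStep]
    congr! 5 with i
    rw [hy, Real.sqrt_sq (norm_nonneg _), block_mulVec_apply hM]
  set q := 1 - σ ^ 2 / (β * Nb)
  set K := 4 * β / (α * σ ^ 2) * evnorm (A *ᵥ xhat) ^ 2
  have hstep_avg :
      ∀ x, ∑ r, pdist (step x r) xhat ^ 2 ≤ Nb * (q * pdist x xhat ^ 2 + (1 - q) * K) := by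
    intro x
    have hrhs : Nb * (q * pdist x xhat ^ 2 + (1 - q) * K) = Nb * pdist x xhat ^ 2
        - σ ^ 2 / β * pdist x xhat ^ 2 + 4 / α * evnorm (A *ᵥ xhat) ^ 2 := by
      simp only [q, K]
      field_simp
      ring
    simpa only [hrhs, Fintype.card_fin, ← hstep'] using
      sum_pdist_blockKaczmarzStep_sq_le hM hdisj hcover hfull hσ.le hsing hα hβ hpave_lo hpave_hi
        x xhat
  have hq : 0 ≤ q := sub_nonneg.mpr (div_le_one_of_le₀ hσβ (by positivity))
  rw [one_div, inv_mul_le_iff₀ (pow_pos hNb l)]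
  have hK : 0 ≤ K := by positivity
  simpa only [Fintype.card_fin] using sum_foldl_ofFn_le_pow_mul_add (fun x => pdist x xhat ^ 2)
    step hq hK (by simpa only [Fintype.card_fin] using hstep_avg) l x0

/-- Convergence of the randomized block Kaczmarz method for phase
retrieval with uniform block selection, under an (N_b, α, β) row paving of A.
The singular value bounds α ≤ σ_min²(A_Γ) and σ_max²(A_Γ) ≤ β are expressed as
α‖z‖₂² ≤ ‖A_Γᴴ z‖₂² ≤ β‖z‖₂² for all z. -/
theorem stmt12 {m n Nb : ℕ} (A : Matrix (Fin m) (Fin n) ℂ)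
    (hrows : ∀ r : Fin m, evnorm (fun j => A r j) = 1)
    (xhat : Fin n → ℂ) (y : Fin m → ℝ)
    (hy : ∀ r, y r = ‖A.mulVec xhat r‖ ^ 2)
    (σ : ℝ) (hσ : 0 < σ)
    (hsing : ∀ v : Fin n → ℂ, σ * evnorm v ≤ evnorm (A.mulVec v))
    (Γ : Fin Nb → Finset (Fin m))
    (hdisj : ∀ i j : Fin Nb, i ≠ j → Disjoint (Γ i) (Γ j))
    (hcover : ∀ k : Fin m, ∃ r, k ∈ Γ r)
    (M : (r : Fin Nb) → Matrix (Γ r) (Fin n) ℂ)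
    (hM : ∀ r (i : Γ r) (j : Fin n), M r i j = A i.1 j)
    (hfull : ∀ r, IsUnit (M r * (M r).conjTranspose))
    (α β : ℝ) (hα : 0 < α) (hαβ : α ≤ β)
    (hpave_lo : ∀ r (z : Γ r → ℂ),
      α * evnorm z ^ 2 ≤ evnorm ((M r).conjTranspose.mulVec z) ^ 2)
    (hpave_hi : ∀ r (z : Γ r → ℂ),
      evnorm ((M r).conjTranspose.mulVec z) ^ 2 ≤ β * evnorm z ^ 2)
    (x0 : Fin n → ℂ)
    (step : (Fin n → ℂ) → Fin Nb → (Fin n → ℂ))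
    (hstep : ∀ (x : Fin n → ℂ) (r : Fin Nb), step x r =
      x + ((M r).conjTranspose * (M r * (M r).conjTranspose)⁻¹).mulVec
        (fun i => (Real.sqrt (y i.1) : ℂ) * phase ((M r).mulVec x i) - (M r).mulVec x i)) :
    ∀ l : ℕ,
      (1 / (Nb : ℝ) ^ l) * ∑ seq : Fin l → Fin Nb,
          pdist ((List.ofFn seq).foldl step x0) xhat ^ 2 ≤
        (1 - σ ^ 2 / (β * (Nb : ℝ))) ^ l * pdist x0 xhat ^ 2 +
          (4 * β / (α * σ ^ 2)) * ∑ r, y r :=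
  stmt12_general A xhat y hy σ hσ hsing Γ hdisj hcover M hM hfull α β hα hαβ hpave_lo hpave_hi x0
    step hstep
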